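/- Let k, m, u > 0 with u < u₀ := m·y₃, where y₃ = (√(1+4k) − 1)/(2k), and let x₃ = (m·y₃ − u)/y₃². Consider the characteristic polynomial λ² − T·λ + D of the Jacobian at the positive equilibrium, where T = m − 2u/y₃ and D = y₃²·x₃·(k·y₃² + 1). Then: (i) if u < u₀/2, every complex root has strictly positive real part; (ii) if u₀/2 < u < u₀, every complex root has strictly negative real part; (iii) if u = u₀/2, the roots are purely imaginary and equal ±i·y₃·ω, where ω = √(x₃·(k·y₃² + 1)). -/

import Mathlib

/-!
For a real monic quadratic `λ² - Tλ + D` with `D > 0`, either both roots are real, with product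
`D > 0` and sum `T`, or they are conjugate with real part `T / 2`; in both cases the real parts have
the sign of `T`. At the equilibrium `T = (u₀ - 2u) / y₃` with `y₃ > 0`, so the sign of `T` is that of
`u₀/2 - u`, and `D = (y₃ ω)²`, so for `T = 0` the roots are `±i y₃ ω`.
-/

open Complex

theorem re_pos_of_sq_sub_mul_add_eq_zero {T D : ℝ} (hT : 0 < T) (hD : 0 < D) {z : ℂ}
    (hz : z ^ 2 - T * z + D = 0) : 0 < z.re := by
  have hre : z.re ^ 2 - z.im ^ 2 - T * z.re + D = 0 := by
    simpa [sq] using congrArg Complex.re hz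
  have him : z.im * (2 * z.re - T) = 0 := by
    linear_combination (by simpa [sq] using congrArg Complex.im hz : _ = (0 : ℝ))
  rcases mul_eq_zero.mp him with hreal | hconj
  · have hprod : z.re * (T - z.re) = D := by rw [hreal] at hre; linear_combination -hre
    by_contra! hnonpos
    nlinarith
  · linarith

theorem re_neg_of_sq_sub_mul_add_eq_zero {T D : ℝ} (hT : T < 0) (hD : 0 < D) {z : ℂ}
    (hz : z ^ 2 - T * z + D = 0) : z.re < 0 := by
  have := re_pos_of_sq_sub_mul_add_eq_zero (T := -T) (neg_pos.mpr hT) hD (z := -z)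
    (by push_cast; linear_combination hz)
  simpa using this

theorem sq_add_sq_eq_zero_iff_eq_I_mul {z w : ℂ} :
    z ^ 2 + w ^ 2 = 0 ↔ z = I * w ∨ z = -(I * w) := by
  rw [← sq_eq_sq_iff_eq_or_eq_neg, mul_pow, I_sq]
  constructor <;> intro h <;> linear_combination h

theorem equilibrium_y_pos {k : ℝ} (hk : 0 < k) : 0 < (Real.sqrt (1 + 4 * k) - 1) / (2 * k) := by
  have hsqrt : 1 < Real.sqrt (1 + 4 * k) := by
    rw [Real.lt_sqrt zero_le_one]; linarith
  exact div_pos (by linarith) (by linarith)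

theorem stmt8_general (k m u : ℝ) (hk : 0 < k)
    (y₃ u₀ x₃ T D ω : ℝ)
    (hy₃ : y₃ = (Real.sqrt (1 + 4 * k) - 1) / (2 * k))
    (hu₀ : u₀ = m * y₃) (hult : u < u₀)
    (hx₃ : x₃ = (m * y₃ - u) / y₃ ^ 2)
    (hT : T = m - 2 * u / y₃)
    (hD : D = y₃ ^ 2 * x₃ * (k * y₃ ^ 2 + 1))
    (hω : ω = Real.sqrt (x₃ * (k * y₃ ^ 2 + 1))) :
    (u < u₀ / 2 →
      ∀ lam : ℂ, lam ^ 2 - (T : ℂ) * lam + (D : ℂ) = 0 → 0 < lam.re) ∧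
    (u₀ / 2 < u → u < u₀ →
      ∀ lam : ℂ, lam ^ 2 - (T : ℂ) * lam + (D : ℂ) = 0 → lam.re < 0) ∧
    (u = u₀ / 2 →
      ∀ lam : ℂ, lam ^ 2 - (T : ℂ) * lam + (D : ℂ) = 0 ↔
        lam = Complex.I * (y₃ * ω) ∨ lam = -(Complex.I * (y₃ * ω))) := by
  have hy₃_pos : 0 < y₃ := hy₃ ▸ equilibrium_y_pos hk
  have hx₃_pos : 0 < x₃ := hx₃ ▸ div_pos (by linarith) (by positivity)
  have hT_eq : T = (u₀ - 2 * u) / y₃ := by rw [hT, hu₀]; field_simp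
  have hD_eq : D = (y₃ * ω) ^ 2 := by
    rw [hD, mul_pow, hω, Real.sq_sqrt (by positivity)]; ring
  have hD_pos : 0 < D := by rw [hD]; positivity
  refine ⟨fun hlt _ => re_pos_of_sq_sub_mul_add_eq_zero ?_ hD_pos,
    fun hgt _ _ => re_neg_of_sq_sub_mul_add_eq_zero ?_ hD_pos, fun heq lam => ?_⟩
  · rw [hT_eq]; exact div_pos (by linarith) hy₃_pos
  · rw [hT_eq]; exact div_neg_of_neg_of_pos (by linarith) hy₃_pos
  · have hT_zero : T = 0 := by rw [hT_eq, heq]; ring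
    rw [hT_zero, hD_eq, ← sq_add_sq_eq_zero_iff_eq_I_mul]
    push_cast
    ring_nf

/-- Roots of the characteristic polynomial `λ² - Tλ + D` of the Jacobian at
the positive equilibrium, where `T = m - 2u/y₃` and `D = y₃²x₃(ky₃²+1)`:
(i) if `u < u₀/2` all roots have positive real part; (ii) if `u₀/2 < u < u₀`
all roots have negative real part; (iii) if `u = u₀/2` the roots are exactly
`±i·y₃·ω` with `ω = √(x₃(ky₃²+1))`. -/
theorem stmt8 (k m u : ℝ) (hk : 0 < k) (hm : 0 < m) (hu : 0 < u)
    (y₃ u₀ x₃ T D ω : ℝ)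
    (hy₃ : y₃ = (Real.sqrt (1 + 4 * k) - 1) / (2 * k))
    (hu₀ : u₀ = m * y₃) (hult : u < u₀)
    (hx₃ : x₃ = (m * y₃ - u) / y₃ ^ 2)
    (hT : T = m - 2 * u / y₃)
    (hD : D = y₃ ^ 2 * x₃ * (k * y₃ ^ 2 + 1))
    (hω : ω = Real.sqrt (x₃ * (k * y₃ ^ 2 + 1))) :
    (u < u₀ / 2 →
      ∀ lam : ℂ, lam ^ 2 - (T : ℂ) * lam + (D : ℂ) = 0 → 0 < lam.re) ∧
    (u₀ / 2 < u → u < u₀ →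
      ∀ lam : ℂ, lam ^ 2 - (T : ℂ) * lam + (D : ℂ) = 0 → lam.re < 0) ∧
    (u = u₀ / 2 →
      ∀ lam : ℂ, lam ^ 2 - (T : ℂ) * lam + (D : ℂ) = 0 ↔
        lam = Complex.I * (y₃ * ω) ∨ lam = -(Complex.I * (y₃ * ω))) :=
  stmt8_general k m u hk y₃ u₀ x₃ T D ω hy₃ hu₀ hult hx₃ hT hD hω
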